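/- Consider the same family of Lie algebras as above with t₁₁ = 0 and t₂₂ ≠ 0. Then the form Ω = β φ¹³_t + θ φ²⁴_t with β θ ≠ 0 is a closed (2,0)-form with Ω ∧ Ω ≠ 0, i.e., an invariant complex symplectic form. -/

import Mathlib

/-
Model: exterior algebra over ℂ on generators gen 0..3 = φ¹..φ⁴, gen 4..7 = φ̄¹..φ̄⁴;
d determined by the structure equations (and conjugates) and the Leibniz rule.

Every term of dφ³ contains φ¹, so d(φ¹ ∧ φ³) = -φ¹ ∧ dφ³ = 0, while φ² and φ⁴ are closed.
Since 2-vectors commute in the exterior algebra, Ω ∧ Ω = 2βθ φ¹ ∧ φ³ ∧ φ² ∧ φ⁴, and this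
4-vector is nonzero because pairing it with the coordinate functionals of φ¹, φ³, φ², φ⁴
gives the determinant of the identity matrix.
-/

noncomputable section

abbrev E := ExteriorAlgebra ℂ (Fin 8 → ℂ)

def gen (i : Fin 8) : E := ExteriorAlgebra.ι ℂ (Pi.single i 1)

def dgen (t22 : ℂ) : Fin 8 → E :=
  ![0, 0,
    (-(1 - (Complex.normSq t22 : ℂ))⁻¹) • (gen 0 * gen 1)
      + (t22 * (1 - (Complex.normSq t22 : ℂ))⁻¹) • (gen 0 * gen 5),
    0, 0, 0,
    (-(1 - (Complex.normSq t22 : ℂ))⁻¹) • (gen 4 * gen 5)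
      + ((starRingEnd ℂ) t22 * (1 - (Complex.normSq t22 : ℂ))⁻¹) • (gen 4 * gen 1),
    0]

def d2 (t22 : ℂ) (i j : Fin 8) : E := dgen t22 i * gen j - gen i * dgen t22 j

/-- Ω = β φ¹∧φ³ + θ φ²∧φ⁴. -/
def Om (b e : ℂ) : E := b • (gen 0 * gen 2) + e • (gen 1 * gen 3)

/-- dΩ, by linearity and the Leibniz rule. -/
def dOm (t22 b e : ℂ) : E := b • d2 t22 0 2 + e • d2 t22 1 3

namespace ExteriorAlgebra

variable {R M : Type*} [CommRing R] [AddCommGroup M] [Module R M]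

theorem ι_mul_ι_mul_ι_comm (x y z : M) :
    ι R x * ι R y * ι R z = ι R z * (ι R x * ι R y) := by
  have hyz : ι R y * ι R z = -(ι R z * ι R y) := eq_neg_of_add_eq_zero_left (ι_add_mul_swap y z)
  have hxz : ι R x * ι R z = -(ι R z * ι R x) := eq_neg_of_add_eq_zero_left (ι_add_mul_swap x z)
  rw [mul_assoc, hyz, mul_neg, ← mul_assoc, hxz, neg_mul, neg_neg, mul_assoc]

theorem ι_mul_ι_mul_ι_mul_ι_comm (x y z w : M) :
    ι R z * ι R w * (ι R x * ι R y) = ι R x * ι R y * (ι R z * ι R w) := by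
  rw [← mul_assoc, ι_mul_ι_mul_ι_comm z w x, mul_assoc, ι_mul_ι_mul_ι_comm z w y, ← mul_assoc]

theorem ι_mul_ι_mul_self (x y : M) : ι R x * ι R y * (ι R x * ι R y) = 0 := by
  rw [← mul_assoc, ι_mul_ι_mul_ι_comm, ← mul_assoc, ι_sq_zero, zero_mul, zero_mul]

theorem smul_ι_mul_ι_add_smul_ι_mul_ι_mul_self (b e : R) (x y z w : M) :
    (b • (ι R x * ι R y) + e • (ι R z * ι R w)) * (b • (ι R x * ι R y) + e • (ι R z * ι R w))
      = (2 * (b * e)) • (ι R x * ι R y * (ι R z * ι R w)) := by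
  simp only [add_mul, mul_add, smul_mul_smul_comm, ι_mul_ι_mul_self, ι_mul_ι_mul_ι_mul_ι_comm,
    smul_zero, zero_add, add_zero, mul_comm e b, two_mul, add_smul]

theorem ιMulti_ne_zero_of_det_ne_zero {n : ℕ} (f : Fin n → Module.Dual R M) (v : Fin n → M)
    (h : (Matrix.of fun i j => f j (v i)).det ≠ 0) : ιMulti R n v ≠ 0 := by
  intro hv
  have : exteriorPower.ιMulti R n v = 0 := Subtype.ext hv
  rw [← exteriorPower.pairingDual_ιMulti_ιMulti, this, map_zero] at h
  exact h rfl

theorem ιMulti_single_ne_zero {ι : Type*} [Nontrivial R] [DecidableEq ι] {n : ℕ}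
    {σ : Fin n → ι} (hσ : Function.Injective σ) :
    ιMulti R n (fun i => (Pi.single (σ i) (1 : R) : ι → R)) ≠ 0 := by
  refine ιMulti_ne_zero_of_det_ne_zero (fun j => LinearMap.proj (σ j)) _ ?_
  have : (Matrix.of fun i j => (Pi.single (σ i) (1 : R) : ι → R) (σ j)) = 1 := by
    ext i j
    simp [Matrix.one_apply, Pi.single_apply, hσ.eq_iff, eq_comm]
  simp [this]

end ExteriorAlgebra

theorem gen_mul_self (i : Fin 8) : gen i * gen i = 0 := ExteriorAlgebra.ι_sq_zero _

theorem gen_zero_mul_dgen_two (t22 : ℂ) : gen 0 * dgen t22 2 = 0 := by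
  change gen 0 * (_ • (gen 0 * gen 1) + _ • (gen 0 * gen 5)) = 0
  rw [mul_add, mul_smul_comm, mul_smul_comm, ← mul_assoc, ← mul_assoc, gen_mul_self, zero_mul,
    zero_mul, smul_zero, smul_zero, add_zero]

theorem dOm_eq_zero (t22 b e : ℂ) : dOm t22 b e = 0 := by
  rw [dOm, d2, d2, gen_zero_mul_dgen_two]
  simp [dgen]

theorem Om_mul_Om (b e : ℂ) :
    Om b e * Om b e = (2 * (b * e)) • (gen 0 * gen 2 * (gen 1 * gen 3)) :=
  ExteriorAlgebra.smul_ι_mul_ι_add_smul_ι_mul_ι_mul_self _ _ _ _ _ _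

theorem gen_zero_two_one_three_ne_zero : gen 0 * gen 2 * (gen 1 * gen 3) ≠ 0 := by
  have h : gen 0 * gen 2 * (gen 1 * gen 3) =
      ExteriorAlgebra.ιMulti ℂ 4
        (fun i => (Pi.single (![(0 : Fin 8), 2, 1, 3] i) (1 : ℂ) : Fin 8 → ℂ)) := by
    rw [ExteriorAlgebra.ιMulti_apply]
    simp [List.ofFn_succ, gen, mul_assoc]
  rw [h]
  exact ExteriorAlgebra.ιMulti_single_ne_zero (by decide)

theorem stmt6_general (t22 : ℂ)
    (b e : ℂ) (hbe : b * e ≠ 0) :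
    dOm t22 b e = 0 ∧ Om b e * Om b e ≠ 0 := by
  refine ⟨dOm_eq_zero t22 b e, ?_⟩
  rw [Om_mul_Om]
  exact smul_ne_zero (mul_ne_zero two_ne_zero hbe) gen_zero_two_one_three_ne_zero

theorem stmt6 (t22 : ℂ) (ht0 : t22 ≠ 0) (ht : ‖t22‖ < 1)
    (b e : ℂ) (hbe : b * e ≠ 0) :
    dOm t22 b e = 0 ∧ Om b e * Om b e ≠ 0 :=
  stmt6_general t22 b e hbe

end
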